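/- arXiv:1410.3767 — 5 statements merged into one kernel-verified Lean document; each statement's English description precedes it below -/
import Mathlib

section
/- For every integer k ≥ 1 there exists a 1-factorization of the complete graph K_{2k} together with a subfamily of ρ(2k) − 1 of its one-factors such that for any two distinct one-factors M, M' in this subfamily, every connected component of the spanning subgraph of K_{2k} whose edge set is M ∪ M' is a cycle of length 4. -/
/-!
Write `2k = 2 ^ (t + 1) * u` with `u` odd and take the vertices to be `(ℤ/(2u-1) ∪ {∞}) × 𝔽₂ᵗ`.
The patterned 1-factorization `(F_m)` of `K_{2u}` on `ℤ/(2u-1) ∪ {∞}` and the translations of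
`𝔽₂ᵗ` combine into a 1-factorization of `K_{2k}`: the factor `(m, h)` sends `(a, e)` to
`(F_m a, e + h)` and the factor `h ≠ 0` sends it to `(a, e + h)`. For a fixed centre `m₀`, the
`2 ^ (t + 1) - 1` factors `(m₀, h)` and `h ≠ 0` are the nonzero elements of a free action of
`𝔽₂ × 𝔽₂ᵗ`, so any two of them, `A` and `B`, are commuting fixed-point-free involutions whose
product has no fixed point either, and their union splits into the 4-cycles `v, A v, A (B v), B v`.
Finally `ρ(2k) ≤ 2 ^ (t + 1)`.
-/

/-- The Hurwitz–Radon function: writing `n = u * 2 ^ (4 * α + β)` with `u` odd and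
`β ∈ {0,1,2,3}`, we set `ρ(n) = 8 * α + 2 ^ β`.  (Here `n.factorization 2` is the
2-adic valuation of `n`.) -/
def hurwitzRadon (n : ℕ) : ℕ :=
  8 * (n.factorization 2 / 4) + 2 ^ (n.factorization 2 % 4)

open Function

variable {ι κ κ' α β : Type*}

/-- Each factor is encoded by the fixed-point-free involution matching every vertex with its
partner. -/
structure IsOneFactorization (F : ι → α → α) : Prop where
  involutive : ∀ m, Involutive (F m)
  apply_ne : ∀ m a, F m a ≠ a
  existsUnique : ∀ a b, a ≠ b → ∃! m, F m a = b

structure IsSquarePair (A B : α → α) : Prop where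
  involutive_left : Involutive A
  involutive_right : Involutive B
  left_ne : ∀ v, A v ≠ v
  right_ne : ∀ v, B v ≠ v
  commute : Function.Commute A B
  comp_ne : ∀ v, A (B v) ≠ v

def HasSquareSubfamily (F : ι → α → α) (κ : Type*) : Prop :=
  ∃ s : κ → ι, Injective s ∧ ∀ a b, a ≠ b → IsSquarePair (F (s a)) (F (s b))

theorem IsOneFactorization.conj {F : ι → α → α} (hF : IsOneFactorization F) (e : α ≃ β)
    (f : κ ≃ ι) : IsOneFactorization fun m => e.conj (F (f m)) where
  involutive m b := by simp [hF.involutive _ _]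
  apply_ne m b := by simpa [← e.eq_symm_apply] using hF.apply_ne (f m) (e.symm b)
  existsUnique a b hab := by
    simpa [← e.eq_symm_apply, f.symm.existsUnique_congr_left] using
      hF.existsUnique _ _ (e.symm.injective.ne hab)

theorem IsSquarePair.conj {A B : α → α} (h : IsSquarePair A B) (e : α ≃ β) :
    IsSquarePair (e.conj A) (e.conj B) where
  involutive_left b := by simp [h.involutive_left _]
  involutive_right b := by simp [h.involutive_right _]
  left_ne b := by simpa [← e.eq_symm_apply] using h.left_ne (e.symm b)
  right_ne b := by simpa [← e.eq_symm_apply] using h.right_ne (e.symm b)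
  commute b := by simp [h.commute _]
  comp_ne b := by simpa [← e.eq_symm_apply] using h.comp_ne (e.symm b)

theorem HasSquareSubfamily.conj {ι' : Type*} {F : ι → α → α} (h : HasSquareSubfamily F κ)
    (e : α ≃ β) (f : ι' ≃ ι) : HasSquareSubfamily (fun m => e.conj (F (f m))) κ := by
  obtain ⟨s, hs, hsq⟩ := h
  exact ⟨f.symm ∘ s, f.symm.injective.comp hs, fun a b hab => by
    simpa using (hsq a b hab).conj e⟩

theorem HasSquareSubfamily.comp_embedding {F : ι → α → α} (h : HasSquareSubfamily F κ)
    (g : κ' ↪ κ) : HasSquareSubfamily F κ' := by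
  obtain ⟨s, hs, hsq⟩ := h
  exact ⟨s ∘ g, hs.comp g.injective, fun a b hab => hsq _ _ (g.injective.ne hab)⟩

section Patterned

variable {R : Type*} [CommRing R] [DecidableEq R]

/-- The patterned 1-factorization of `K_{N+1}` on `R ∪ {∞}`, with `none` playing `∞`: the factor
with centre `m` matches `∞` with `m` and every other `z` with its reflection `2 * m - z`. -/
def patternedFactor (m : R) : Option R → Option R
  | none => some m
  | some z => if z = m then none else some (2 * m - z)

theorem patternedFactor_involutive (m : R) : Involutive (patternedFactor m) := by
  rintro (_ | z)
  · simp [patternedFactor]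
  · by_cases hz : z = m
    · simp [patternedFactor, hz]
    · have hz' : 2 * m - z ≠ m := fun h => hz (by linear_combination -h)
      simp [patternedFactor, hz, hz']

variable (h2 : IsUnit (2 : R))
include h2

theorem patternedFactor_ne (m : R) (w : Option R) : patternedFactor m w ≠ w := by
  rcases w with _ | z
  · simp [patternedFactor]
  · by_cases hz : z = m
    · simp [patternedFactor, hz]
    · simp only [patternedFactor, hz, if_false, ne_eq, Option.some.injEq]
      exact fun h => hz (h2.mul_left_cancel (by linear_combination h)).symm

theorem existsUnique_patternedFactor_eq {w w' : Option R} (hw : w ≠ w') :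
    ∃! m, patternedFactor m w = w' := by
  rcases w with _ | z <;> rcases w' with _ | z'
  · exact absurd rfl hw
  · exact ⟨z', rfl, fun m hm => by simpa [patternedFactor] using hm⟩
  · refine ⟨z, by simp [patternedFactor], fun m hm => ?_⟩
    by_contra hzm
    simp [patternedFactor, Ne.symm hzm] at hm
  · obtain ⟨c, hc⟩ := h2.dvd (a := z + z')
    have hzc : z ≠ c := fun h => hw (congrArg some (by linear_combination 2 * h - hc))
    refine ⟨c, by simp only [patternedFactor, hzc, if_false]; congr 1; linear_combination -hc,
      fun m hm => ?_⟩
    by_cases hzm : z = m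
    · simp [patternedFactor, hzm] at hm
    · simp only [patternedFactor, hzm, if_false, Option.some.injEq] at hm
      exact h2.mul_left_cancel (by linear_combination hm + hc)

theorem isOneFactorization_patternedFactor : IsOneFactorization (patternedFactor (R := R)) :=
  ⟨patternedFactor_involutive, patternedFactor_ne h2,
    fun _ _ => existsUnique_patternedFactor_eq h2⟩

end Patterned

section Product

variable {E : Type*} [AddCommGroup E]

def prodFactor (F : ι → α → α) : (ι × E) ⊕ {h : E // h ≠ 0} → α × E → α × E
  | .inl (m, h), v => (F m v.1, v.2 + h)
  | .inr h, v => (v.1, v.2 + h)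

def squareIndex (m₀ : ι) : E ⊕ {h : E // h ≠ 0} → (ι × E) ⊕ {h : E // h ≠ 0} :=
  Sum.map (m₀, ·) id

theorem squareIndex_injective (m₀ : ι) : Injective (squareIndex (E := E) m₀) :=
  (Prod.mk_right_injective m₀).sumMap injective_id

variable {F : ι → α → α} (hF : IsOneFactorization F) (hE : ∀ h : E, h + h = 0)
include hF hE

theorem IsOneFactorization.prodFactor : IsOneFactorization (prodFactor (E := E) F) where
  involutive := by
    rintro (⟨m, h⟩ | h) ⟨a, e⟩
    · simp [_root_.prodFactor, hF.involutive m a, add_assoc, hE]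
    · simp [_root_.prodFactor, add_assoc, hE]
  apply_ne := by
    rintro (⟨m, h⟩ | ⟨h, hh⟩) ⟨a, e⟩
    · simp [_root_.prodFactor, hF.apply_ne m a]
    · simpa [_root_.prodFactor] using hh
  existsUnique := by
    rintro ⟨a, e⟩ ⟨b, f⟩ hne
    by_cases hab : a = b
    · subst hab
      have hef : f - e ≠ 0 := sub_ne_zero.mpr fun h => hne (by rw [h])
      refine ⟨.inr ⟨f - e, hef⟩, by simp [_root_.prodFactor], ?_⟩
      rintro (⟨m, h⟩ | ⟨h, hh⟩) hm <;> simp only [_root_.prodFactor, Prod.mk.injEq] at hm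
      · exact absurd hm.1 (hF.apply_ne m a)
      · simp [← hm.2]
    · obtain ⟨m, hm, huniq⟩ := hF.existsUnique a b hab
      refine ⟨.inl (m, f - e), by simp [_root_.prodFactor, hm], ?_⟩
      rintro (⟨m', h⟩ | ⟨h, hh⟩) hm' <;> simp only [_root_.prodFactor, Prod.mk.injEq] at hm'
      · simp [huniq m' hm'.1, ← hm'.2]
      · exact absurd hm'.1 hab

theorem isSquarePair_prodFactor_squareIndex (m₀ : ι) {x y : E ⊕ {h : E // h ≠ 0}} (hxy : x ≠ y) :
    IsSquarePair (prodFactor F (squareIndex m₀ x)) (prodFactor F (squareIndex m₀ y)) := by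
  have hF' := hF.prodFactor hE
  have eq_of_add_eq_zero {h h' : E} (hsum : h' + h = 0) : h = h' :=
    add_left_cancel (hsum.trans (hE h').symm)
  refine ⟨hF'.involutive _, hF'.involutive _, hF'.apply_ne _, hF'.apply_ne _, ?_, ?_⟩
  · rintro ⟨a, e⟩
    rcases x with h | h <;> rcases y with h' | h' <;>
      simp [prodFactor, squareIndex, add_right_comm]
  · rcases x with h | h <;> rcases y with h' | h' <;> rintro ⟨a, e⟩ hv <;>
      simp only [prodFactor, squareIndex, Sum.map_inl, Sum.map_inr, id, Prod.mk.injEq,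
        add_assoc, add_eq_left, hF.involutive m₀ a] at hv
    · exact hxy (congrArg Sum.inl (eq_of_add_eq_zero hv.2))
    · exact hF.apply_ne m₀ a hv.1
    · exact hF.apply_ne m₀ a hv.1
    · exact hxy (congrArg Sum.inr (Subtype.ext (eq_of_add_eq_zero hv.2)))

end Product

theorem SimpleGraph.mem_of_reachable_of_adj_closed {V : Type*} {G : SimpleGraph V} {S : Set V}
    (hS : ∀ x ∈ S, ∀ y, G.Adj x y → y ∈ S) {u v : V} (huv : G.Reachable u v) (hu : u ∈ S) :
    v ∈ S := by
  rw [SimpleGraph.reachable_iff_reflTransGen] at huv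
  induction huv with
  | refl => exact hu
  | tail _ hadj ih => exact hS _ ih _ hadj

namespace IsSquarePair

variable {A B : α → α} (h : IsSquarePair A B)
include h

theorem fromRel_adj {v w : α} :
    (SimpleGraph.fromRel fun i j => A i = j ∨ B i = j).Adj v w ↔ A v = w ∨ B v = w := by
  simp only [SimpleGraph.fromRel_adj]
  constructor
  · rintro ⟨-, hvw | hwv | hwv⟩
    · exact hvw
    · exact .inl (by rw [← hwv, h.involutive_left])
    · exact .inr (by rw [← hwv, h.involutive_right])
  · rintro (rfl | rfl)
    · exact ⟨(h.left_ne v).symm, .inl (.inl rfl)⟩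
    · exact ⟨(h.right_ne v).symm, .inl (.inr rfl)⟩

theorem left_ne_right (v : α) : A v ≠ B v := fun hv =>
  h.comp_ne v (by rw [← hv, h.involutive_left])

theorem ncard_neighborSet_fromRel (v : α) :
    ((SimpleGraph.fromRel fun i j => A i = j ∨ B i = j).neighborSet v).ncard = 2 := by
  have hnbhd :
      (SimpleGraph.fromRel fun i j => A i = j ∨ B i = j).neighborSet v = {A v, B v} := by
    ext w
    rw [SimpleGraph.mem_neighborSet, h.fromRel_adj]
    exact or_congr eq_comm eq_comm
  rw [hnbhd, Set.ncard_pair (h.left_ne_right v)]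

theorem supp_connectedComponentMk_fromRel (v : α) :
    ((SimpleGraph.fromRel fun i j => A i = j ∨ B i = j).connectedComponentMk v).supp =
      {v, A v, B v, A (B v)} := by
  set G := SimpleGraph.fromRel fun i j => A i = j ∨ B i = j
  have hBA (x : α) : B (A x) = A (B x) := (h.commute x).symm
  have hclosed : ∀ x ∈ ({v, A v, B v, A (B v)} : Set α), ∀ y, G.Adj x y →
      y ∈ ({v, A v, B v, A (B v)} : Set α) := by
    intro x hx y hxy
    simp only [Set.mem_insert_iff, Set.mem_singleton_iff] at hx ⊢
    rcases h.fromRel_adj.mp hxy with rfl | rfl <;> rcases hx with rfl | rfl | rfl | rfl <;>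
      simp [h.involutive_left _, h.involutive_right _, hBA]
  have hA (x : α) : G.Reachable x (A x) := (h.fromRel_adj.mpr (.inl rfl)).reachable
  have hB (x : α) : G.Reachable x (B x) := (h.fromRel_adj.mpr (.inr rfl)).reachable
  ext w
  rw [SimpleGraph.ConnectedComponent.mem_supp_iff, SimpleGraph.ConnectedComponent.eq]
  refine ⟨fun hwv => SimpleGraph.mem_of_reachable_of_adj_closed hclosed hwv.symm (by simp), ?_⟩
  simp only [Set.mem_insert_iff, Set.mem_singleton_iff]
  rintro (rfl | rfl | rfl | rfl)
  exacts [.refl w, (hA v).symm, (hB v).symm, ((hB v).trans (hA (B v))).symm]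

theorem ncard_supp_connectedComponentMk_fromRel (v : α) :
    ((SimpleGraph.fromRel fun i j => A i = j ∨ B i = j).connectedComponentMk v).supp.ncard = 4 := by
  have hAB := h.left_ne_right v
  have hAAB : A v ≠ A (B v) := fun hv => h.right_ne v (h.involutive_left.injective hv).symm
  rw [h.supp_connectedComponentMk_fromRel, Set.ncard_insert_of_notMem, Set.ncard_insert_of_notMem,
    Set.ncard_pair (h.left_ne (B v)).symm]
  · simp [hAB, hAAB]
  · simp [(h.left_ne v).symm, (h.right_ne v).symm, (h.comp_ne v).symm]

end IsSquarePair

theorem eight_mul_div_four_add_two_pow_mod_four_le (t : ℕ) :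
    8 * (t / 4) + 2 ^ (t % 4) ≤ 2 ^ t := by
  induction t using Nat.strong_induction_on with
  | _ t ih =>
    rcases lt_or_ge t 4 with ht | ht
    · interval_cases t <;> decide
    · obtain ⟨s, rfl⟩ : ∃ s, t = s + 4 := ⟨t - 4, by omega⟩
      have := ih s (by omega)
      have : 1 ≤ 2 ^ s := Nat.one_le_two_pow
      rw [pow_add, Nat.add_mod_right, show (s + 4) / 4 = s / 4 + 1 by omega]
      omega

theorem hurwitzRadon_le_two_pow_factorization (n : ℕ) : hurwitzRadon n ≤ 2 ^ n.factorization 2 :=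
  eight_mul_div_four_add_two_pow_mod_four_le _

theorem Nat.factorization_two_pow_mul_of_odd {u : ℕ} (hu : Odd u) (t : ℕ) :
    (2 ^ t * u).factorization 2 = t := by
  rw [Nat.factorization_mul (by positivity) (by rintro rfl; simp at hu), Finsupp.add_apply,
    Nat.Prime.factorization_pow Nat.prime_two, Finsupp.single_eq_same,
    Nat.factorization_eq_zero_of_not_dvd (by simpa [Nat.two_dvd_ne_zero] using Nat.odd_iff.mp hu),
    add_zero]

theorem exists_oneFactorization_hasSquareSubfamily (k : ℕ) (hk : k ≠ 0) :
    ∃ F : Fin (2 * k - 1) → Fin (2 * k) → Fin (2 * k), IsOneFactorization F ∧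
      HasSquareSubfamily F (Fin (2 ^ (2 * k).factorization 2 - 1)) := by
  obtain ⟨t, u, hu, rfl⟩ := Nat.exists_eq_two_pow_mul_odd hk
  have ht : (2 * (2 ^ t * u)).factorization 2 = t + 1 := by
    rw [← mul_assoc, ← pow_succ', Nat.factorization_two_pow_mul_of_odd hu]
  set N := 2 * u - 1
  have hu1 : 1 ≤ u := hu.pos
  have hN : N + 1 = 2 * u := by omega
  have : NeZero N := ⟨by omega⟩
  have h2 : IsUnit (2 : ZMod N) := by
    simpa using (ZMod.isUnit_iff_coprime 2 N).mpr (Nat.coprime_two_left.mpr ⟨u - 1, by omega⟩)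
  set E := Fin t → ZMod 2
  have hE : ∀ h : E, h + h = 0 := fun h => funext fun i => CharTwo.add_self_eq_zero (h i)
  have hcardE : Fintype.card E = 2 ^ t := by simp [E]
  have hcardE' : Fintype.card {h : E // h ≠ 0} = 2 ^ t - 1 := by
    simp [Fintype.card_subtype_compl, hcardE]
  have hq : 1 ≤ 2 ^ t := Nat.one_le_two_pow
  have hV : Fintype.card (Option (ZMod N) × E) = 2 * (2 ^ t * u) := by
    rw [Fintype.card_prod, Fintype.card_option, ZMod.card, hN, hcardE]
    ring
  have hI : Fintype.card ((ZMod N × E) ⊕ {h : E // h ≠ 0}) = 2 * (2 ^ t * u) - 1 := by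
    have : N * 2 ^ t + 2 ^ t = 2 * (2 ^ t * u) := by rw [← add_one_mul, hN]; ring
    rw [Fintype.card_sum, Fintype.card_prod, ZMod.card, hcardE, hcardE']
    omega
  have hJ : Fintype.card (E ⊕ {h : E // h ≠ 0}) = 2 ^ (2 * (2 ^ t * u)).factorization 2 - 1 := by
    rw [Fintype.card_sum, hcardE, hcardE', ht, pow_succ]
    omega
  have hP := isOneFactorization_patternedFactor h2
  have hsq : HasSquareSubfamily (prodFactor (patternedFactor (R := ZMod N)))
      (E ⊕ {h : E // h ≠ 0}) :=
    ⟨squareIndex 0, squareIndex_injective _, fun _ _ => isSquarePair_prodFactor_squareIndex hP hE _⟩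
  exact ⟨_,
    (hP.prodFactor hE).conj (Fintype.equivFinOfCardEq hV) (Fintype.equivFinOfCardEq hI).symm,
    (hsq.conj _ _).comp_embedding (Fintype.equivFinOfCardEq hJ).symm.toEmbedding⟩

/-- For every `k ≥ 1` there is a 1-factorization of the complete graph `K_{2k}` — encoded
as a family `F` of `2k − 1` fixed-point-free involutions of the vertex set such that every
pair of distinct vertices is matched by exactly one of them — together with an injection
`s` selecting `ρ(2k) − 1` of the one-factors, such that for any two distinct selected
one-factors, in the spanning subgraph of `K_{2k}` whose edges are the union of the two
one-factors every vertex has degree 2 and every connected component has exactly 4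
vertices; i.e. every connected component is a cycle of length 4. -/
theorem exists_oneFactorization_with_square_subfamily (k : ℕ) (hk : 1 ≤ k) :
    ∃ F : Fin (2 * k - 1) → (Fin (2 * k) → Fin (2 * k)),
      (∀ m, Function.Involutive (F m)) ∧
      (∀ m i, F m i ≠ i) ∧
      (∀ i j : Fin (2 * k), i ≠ j → ∃! m, F m i = j) ∧
      ∃ s : Fin (hurwitzRadon (2 * k) - 1) → Fin (2 * k - 1),
        Function.Injective s ∧
        ∀ a b, a ≠ b →
          (let G : SimpleGraph (Fin (2 * k)) :=
            SimpleGraph.fromRel (fun i j => F (s a) i = j ∨ F (s b) i = j);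
          (∀ v, (G.neighborSet v).ncard = 2) ∧
          (∀ v, (G.connectedComponentMk v).supp.ncard = 4)) := by
  obtain ⟨F, hF, hsq⟩ := exists_oneFactorization_hasSquareSubfamily k (by omega)
  obtain ⟨s, hs, hsq⟩ := hsq.comp_embedding
    (Fin.castLEEmb (Nat.sub_le_sub_right (hurwitzRadon_le_two_pow_factorization (2 * k)) 1))
  refine ⟨F, hF.involutive, hF.apply_ne, hF.existsUnique, s, hs, fun a b hab => ?_⟩
  exact ⟨(hsq a b hab).ncard_neighborSet_fromRel,
    (hsq a b hab).ncard_supp_connectedComponentMk_fromRel⟩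
end

section
/- Let Z and V be finite-dimensional real vector spaces equipped with nondegenerate symmetric bilinear forms ⟨·,·⟩_Z and ⟨·,·⟩_V, and let J : Z → End(V) be a linear map such that for every z ∈ Z: J_z² = −⟨z,z⟩_Z·id_V and ⟨J_z u, v⟩_V = −⟨u, J_z v⟩_V for all u,v ∈ V. Define a bracket on Z ⊕ V by declaring Z central, and for u,v ∈ V letting [u,v] be the unique element of Z satisfying ⟨z, [u,v]⟩_Z = ⟨J_z u, v⟩_V for all z ∈ Z (this element exists and is unique by nondegeneracy of ⟨·,·⟩_Z). Then this bracket is well defined and alternating, it makes Z ⊕ V a two-step nilpotent real Lie algebra whose center contains Z, and the operators J_z satisfy ⟨J_z u, J_z v⟩_V = ⟨z,z⟩_Z⟨u,v⟩_V for all z ∈ Z and u,v ∈ V; in particular, if Z equals the center, then Z ⊕ V with the form ⟨·,·⟩_Z + ⟨·,·⟩_V is a pseudo H-type algebra. -/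
/-!
The bracket `br : V × V → Z` comes from Riesz representation: for fixed `u, v` the functional
`z ↦ ⟨J_z u, v⟩` is represented through the nondegenerate form on `Z`. It is alternating because
`⟨J_z u, u⟩` is both symmetric and skew in `u`, and the operators `J_z` are isometries up to the
factor `⟨z, z⟩` because `⟨J_z u, J_z v⟩ = -⟨u, J_z² v⟩`. On `Z × V` the bracket
`(br x.2 y.2, 0)` takes values in the centre `Z × 0`, so it is two-step nilpotent and the Jacobi
identity holds trivially.
-/

namespace LinearMap

section Representation

variable {K Z V W : Type*} [Field K] [AddCommGroup Z] [Module K Z] [FiniteDimensional K Z]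
  [AddCommGroup V] [Module K V] [AddCommGroup W] [Module K W]

theorem existsUnique_representing_bilinMap (B : Z →ₗ[K] Z →ₗ[K] K) (hB : B.SeparatingLeft)
    (φ : Z →ₗ[K] V →ₗ[K] W →ₗ[K] K) :
    ∃! br : V →ₗ[K] W →ₗ[K] Z, ∀ z u v, B z (br u v) = φ z u v := by
  have hB' : BilinForm.Nondegenerate B.flip := (BilinForm.Nondegenerate.ofSeparatingLeft hB).flip
  let e := BilinForm.toDual B.flip hB'
  refine ⟨(lflip.toLinearMap ∘ₗ φ.flip).compr₂ e.symm.toLinearMap, fun z u v => ?_,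
    fun br' hbr' => ?_⟩
  · exact BilinForm.apply_toDual_symm_apply (hB := hB') _ z
  · ext u v
    refine e.injective (LinearMap.ext fun z => ?_)
    simp [e, BilinForm.toDual_def, hbr']

end Representation

section Skew

variable {K M : Type*} [CommRing K] [AddCommGroup M] [Module K M] {B : M →ₗ[K] M →ₗ[K] K}
  {A : Module.End K M}

theorem apply_self_eq_zero_of_skew [NoZeroDivisors K] [CharZero K] (hB : ∀ u v, B u v = B v u)
    (hA : ∀ u v, B (A u) v = -B u (A v)) (u : M) : B (A u) u = 0 := by
  rw [← CharZero.eq_neg_self_iff]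
  conv_rhs => rw [hB]
  exact hA u u

theorem apply_skew_skew_eq_neg_mul {c : K} (hA : ∀ u v, B (A u) v = -B u (A v))
    (hsq : A ∘ₗ A = c • LinearMap.id) (u v : M) : B (A u) (A v) = -c * B u v := by
  have hAA : A (A v) = c • v := by rw [← LinearMap.comp_apply, hsq]; rfl
  rw [hA, hAA, map_smul, smul_eq_mul, neg_mul]

end Skew

end LinearMap

section CentralExtension

variable {K Z V : Type*} [CommRing K] [AddCommGroup Z] [Module K Z] [AddCommGroup V] [Module K V]
  (br : V →ₗ[K] V →ₗ[K] Z)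

def centralExtensionBracket (x y : Z × V) : Z × V := (br x.2 y.2, 0)

theorem centralExtensionBracket_swap (hbr : br.IsAlt) (x y : Z × V) :
    centralExtensionBracket br x y = -centralExtensionBracket br y x := by
  rw [centralExtensionBracket, centralExtensionBracket, Prod.neg_mk, hbr.neg, neg_zero]

theorem centralExtensionBracket_bracket_left (x y w : Z × V) :
    centralExtensionBracket br (centralExtensionBracket br x y) w = 0 := by
  simp [centralExtensionBracket]

theorem centralExtensionBracket_bracket_right (x y w : Z × V) :
    centralExtensionBracket br x (centralExtensionBracket br y w) = 0 := by
  simp [centralExtensionBracket]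

theorem centralExtensionBracket_jacobi (x y w : Z × V) :
    centralExtensionBracket br x (centralExtensionBracket br y w) +
      centralExtensionBracket br y (centralExtensionBracket br w x) +
      centralExtensionBracket br w (centralExtensionBracket br x y) = 0 := by
  simp only [centralExtensionBracket_bracket_right, add_zero]

theorem centralExtensionBracket_inl (z : Z) (x : Z × V) :
    centralExtensionBracket br (z, 0) x = 0 := by
  simp [centralExtensionBracket]

end CentralExtension

theorem pseudoHType_from_Clifford_module_general (Z V : Type)
    [AddCommGroup Z] [Module ℝ Z] [FiniteDimensional ℝ Z]
    [AddCommGroup V] [Module ℝ V]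
    (BZ : Z →ₗ[ℝ] Z →ₗ[ℝ] ℝ) (BV : V →ₗ[ℝ] V →ₗ[ℝ] ℝ)
    (hBZnd : ∀ z : Z, (∀ w : Z, BZ z w = 0) → z = 0)
    (hBVsymm : ∀ u v : V, BV u v = BV v u)
    (J : Z →ₗ[ℝ] Module.End ℝ V)
    (hJsq : ∀ z : Z, (J z) ∘ₗ (J z) = (-(BZ z z)) • (LinearMap.id : V →ₗ[ℝ] V))
    (hJskew : ∀ (z : Z) (u v : V), BV (J z u) v = - BV u (J z v)) :
    ∃ br : V →ₗ[ℝ] V →ₗ[ℝ] Z,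
      (∀ (z : Z) (u v : V), BZ z (br u v) = BV (J z u) v) ∧
      (∀ br' : V →ₗ[ℝ] V →ₗ[ℝ] Z,
        (∀ (z : Z) (u v : V), BZ z (br' u v) = BV (J z u) v) → br' = br) ∧
      (∀ u : V, br u u = 0) ∧
      (let bb : Z × V → Z × V → Z × V := fun x y => (br x.2 y.2, (0 : V));
        (∀ x y : Z × V, bb x y = - bb y x) ∧
        (∀ x y w : Z × V, bb (bb x y) w = 0) ∧
        (∀ x y w : Z × V, bb x (bb y w) + bb y (bb w x) + bb w (bb x y) = 0) ∧
        (∀ (z : Z) (x : Z × V), bb (z, (0 : V)) x = 0)) ∧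
      (∀ (z : Z) (u v : V), BV (J z u) (J z v) = BZ z z * BV u v) := by
  -- the trilinear form `(z, u, v) ↦ ⟨J_z u, v⟩`
  obtain ⟨br, hbr, huniq⟩ := LinearMap.existsUnique_representing_bilinMap BZ hBZnd
    (LinearMap.llcomp ℝ V V _ BV ∘ₗ J)
  have hsep : BZ.SeparatingRight := (LinearMap.BilinForm.Nondegenerate.ofSeparatingLeft hBZnd).2
  have halt : br.IsAlt := fun u => hsep _ fun z => by
    rw [hbr]
    exact LinearMap.apply_self_eq_zero_of_skew hBVsymm (hJskew z) u
  refine ⟨br, hbr, huniq, halt, ⟨centralExtensionBracket_swap br halt,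
    centralExtensionBracket_bracket_left br, centralExtensionBracket_jacobi br,
    centralExtensionBracket_inl br⟩, fun z u v => ?_⟩
  simpa using LinearMap.apply_skew_skew_eq_neg_mul (hJskew z) (hJsq z) u v

/-- From an admissible Clifford-module structure to a pseudo H-type algebra: given
finite-dimensional real spaces `Z`, `V` with nondegenerate symmetric bilinear forms and a
linear map `J : Z → End(V)` with `J_z² = −⟨z,z⟩·id` and `J_z` skew-symmetric, there is a
unique bilinear bracket `br : V × V → Z` with `⟨z, br u v⟩ = ⟨J_z u, v⟩`; it is
alternating, and the induced bracket on `Z ⊕ V` (with `Z` central,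
`[(z₁,u),(z₂,v)] = (br u v, 0)`) is antisymmetric, two-step nilpotent, satisfies the
Jacobi identity and has `Z` in its center; moreover the operators satisfy
`⟨J_z u, J_z v⟩ = ⟨z,z⟩⟨u,v⟩`. -/
theorem pseudoHType_from_Clifford_module (Z V : Type)
    [AddCommGroup Z] [Module ℝ Z] [FiniteDimensional ℝ Z]
    [AddCommGroup V] [Module ℝ V] [FiniteDimensional ℝ V]
    (BZ : Z →ₗ[ℝ] Z →ₗ[ℝ] ℝ) (BV : V →ₗ[ℝ] V →ₗ[ℝ] ℝ)
    (hBZsymm : ∀ z w : Z, BZ z w = BZ w z)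
    (hBZnd : ∀ z : Z, (∀ w : Z, BZ z w = 0) → z = 0)
    (hBVsymm : ∀ u v : V, BV u v = BV v u)
    (hBVnd : ∀ u : V, (∀ v : V, BV u v = 0) → u = 0)
    (J : Z →ₗ[ℝ] Module.End ℝ V)
    (hJsq : ∀ z : Z, (J z) ∘ₗ (J z) = (-(BZ z z)) • (LinearMap.id : V →ₗ[ℝ] V))
    (hJskew : ∀ (z : Z) (u v : V), BV (J z u) v = - BV u (J z v)) :
    ∃ br : V →ₗ[ℝ] V →ₗ[ℝ] Z,
      (∀ (z : Z) (u v : V), BZ z (br u v) = BV (J z u) v) ∧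
      (∀ br' : V →ₗ[ℝ] V →ₗ[ℝ] Z,
        (∀ (z : Z) (u v : V), BZ z (br' u v) = BV (J z u) v) → br' = br) ∧
      (∀ u : V, br u u = 0) ∧
      (let bb : Z × V → Z × V → Z × V := fun x y => (br x.2 y.2, (0 : V));
        (∀ x y : Z × V, bb x y = - bb y x) ∧
        (∀ x y w : Z × V, bb (bb x y) w = 0) ∧
        (∀ x y w : Z × V, bb x (bb y w) + bb y (bb w x) + bb w (bb x y) = 0) ∧
        (∀ (z : Z) (x : Z × V), bb (z, (0 : V)) x = 0)) ∧
      (∀ (z : Z) (u v : V), BV (J z u) (J z v) = BZ z z * BV u v) :=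
  pseudoHType_from_Clifford_module_general Z V BZ BV hBZnd hBVsymm J hJsq hJskew
end

section
/- Let k ≥ 1, let e_1,…,e_{2k} be the standard basis of ℝ^{2k} with the neutral symmetric bilinear form ⟨e_i,e_j⟩ = 0 for i ≠ j, ⟨e_i,e_i⟩ = 1/k for i ≤ k and ⟨e_i,e_i⟩ = −1/k for i > k. Let p be a perfect matching of {1,…,2k} and let J : ℝ^{2k} → ℝ^{2k} be linear and skew-symmetric with respect to ⟨·,·⟩ such that for every pair (i,j) ∈ p with i < j one has ⟨J e_i, e_j⟩ = ±1/k and ⟨J e_i, e_m⟩ = 0 for all m ≠ j. If J² = λ·id for some λ ∈ {1,−1}, then exactly one of the following alternatives holds for ALL pairs (i,j) ∈ p simultaneously: either every pair (i,j) ∈ p satisfies (i ≤ k and j ≤ k) or (i > k and j > k) — and then λ = −1 — or every pair (i,j) ∈ p, i < j, satisfies i ≤ k < j — and then λ = 1. -/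
/-- The neutral-signature symmetric bilinear form on `ℝ^{2k}` with
`⟨e_i, e_i⟩ = 1/k` for `i ≤ k` and `⟨e_i, e_i⟩ = −1/k` for `i > k`
(in 0-based indexing: `i < k`, resp. `k ≤ i`). -/
noncomputable def neutralForm (k : ℕ) (u v : Fin (2 * k) → ℝ) : ℝ :=
  ∑ i : Fin (2 * k), (if i.val < k then (1 : ℝ) / k else -(1 / k)) * u i * v i

/-- The standard basis vector `e_i` of `ℝ^{2k}`. -/
noncomputable def stdVec (k : ℕ) (i : Fin (2 * k)) : Fin (2 * k) → ℝ :=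
  Pi.single i 1

/-!
Write `ε i = ⟨e_i, e_i⟩ = ±1/k`. For a pair `i < j` of the matching, the hypotheses force
`J e_i = c e_j` with `c² = 1`. Evaluating `J² e_i = λ e_i` at `i` and using skew-symmetry
`ε_i (J e_j)_i = -ε_j c` gives `λ ε_i = -c² ε_j = -ε_j`. So `λ = 1` makes every pair cross the
signature split and `λ = -1` keeps every pair inside one block.
-/

/-- The diagonal entry `⟨e_i, e_i⟩` of `neutralForm`. -/
noncomputable def signWeight (k : ℕ) (i : Fin (2 * k)) : ℝ :=
  if i.val < k then 1 / k else -(1 / k)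

section signWeight

variable {k : ℕ}

theorem neutralForm_stdVec_right (u : Fin (2 * k) → ℝ) (m : Fin (2 * k)) :
    neutralForm k u (stdVec k m) = signWeight k m * u m := by
  rw [neutralForm, Finset.sum_eq_single m]
  · simp [stdVec, signWeight]
  · intro b _ hb
    simp [stdVec, hb]
  · simp

theorem neutralForm_stdVec_left (v : Fin (2 * k) → ℝ) (m : Fin (2 * k)) :
    neutralForm k (stdVec k m) v = signWeight k m * v m := by
  rw [neutralForm, Finset.sum_eq_single m]
  · simp [stdVec, signWeight]
  · intro b _ hb
    simp [stdVec, hb]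
  · simp

theorem one_div_pos_of_fin (i : Fin (2 * k)) : (0 : ℝ) < 1 / k := by
  have : 0 < k := by have := i.isLt; omega
  positivity

theorem signWeight_ne_zero (i : Fin (2 * k)) : signWeight k i ≠ 0 := by
  have := one_div_pos_of_fin i
  unfold signWeight
  split_ifs <;> linarith

theorem signWeight_sq (i : Fin (2 * k)) : signWeight k i ^ 2 = (1 / k) ^ 2 := by
  unfold signWeight
  split_ifs <;> ring

theorem signWeight_eq_iff (i j : Fin (2 * k)) :
    signWeight k i = signWeight k j ↔ (i.val < k ↔ j.val < k) := by
  have ha := one_div_pos_of_fin i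
  unfold signWeight
  generalize (1 : ℝ) / k = a at ha
  split_ifs with hi hj hj <;> simp only [hi, hj] <;> constructor <;> intros <;>
    first | trivial | linarith

theorem signWeight_eq_neg_iff (i j : Fin (2 * k)) :
    signWeight k i = -signWeight k j ↔ ¬(i.val < k ↔ j.val < k) := by
  have ha := one_div_pos_of_fin i
  unfold signWeight
  generalize (1 : ℝ) / k = a at ha
  split_ifs with hi hj hj <;> simp only [hi, hj] <;> constructor <;> intros <;>
    first | trivial | linarith

theorem sq_eq_one_of_signWeight_mul {j : Fin (2 * k)} {c : ℝ}
    (h : signWeight k j * c = 1 / k ∨ signWeight k j * c = -(1 / k)) : c ^ 2 = 1 := by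
  have hsq : (signWeight k j * c) ^ 2 = (1 / k) ^ 2 := by
    rcases h with h | h <;> simp [h]
  rw [mul_pow, signWeight_sq] at hsq
  have hne : ((1 : ℝ) / k) ^ 2 ≠ 0 := pow_ne_zero 2 (one_div_pos_of_fin j).ne'
  exact mul_left_cancel₀ hne (hsq.trans (mul_one _).symm)

end signWeight

section skew

variable {k : ℕ} {J : (Fin (2 * k) → ℝ) →ₗ[ℝ] (Fin (2 * k) → ℝ)}

theorem eq_smul_stdVec_of_neutralForm_eq_zero {v : Fin (2 * k) → ℝ} {j : Fin (2 * k)}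
    (h : ∀ m, m ≠ j → neutralForm k v (stdVec k m) = 0) : v = v j • stdVec k j := by
  funext m
  by_cases hm : m = j
  · subst hm
    simp [stdVec]
  · have := h m hm
    rw [neutralForm_stdVec_right, mul_eq_zero] at this
    simpa [stdVec, hm, signWeight_ne_zero m] using this

theorem mul_signWeight_eq_of_apply_stdVec
    (hskew : ∀ u v, neutralForm k (J u) v = -neutralForm k u (J v))
    {lam : ℝ} (hJsq : ∀ u, J (J u) = lam • u)
    {i j : Fin (2 * k)} {c : ℝ} (hJi : J (stdVec k i) = c • stdVec k j) :
    lam * signWeight k i = -(c ^ 2 * signWeight k j) := by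
  have hsq : c * J (stdVec k j) i = lam := by
    have := congrFun (hJsq (stdVec k i)) i
    rw [hJi, map_smul] at this
    simpa [stdVec] using this
  have hskew_ji : signWeight k i * J (stdVec k j) i = -(signWeight k j * c) := by
    have := hskew (stdVec k j) (stdVec k i)
    rw [neutralForm_stdVec_right, hJi, neutralForm_stdVec_left] at this
    simpa [stdVec, mul_comm] using this
  linear_combination (-signWeight k i) * hsq + c * hskew_ji

end skew

theorem Function.Involutive.forall_of_lt {α : Type*} [LinearOrder α] {σ : α → α}
    (hσ : Function.Involutive σ) {r : α → α → Prop} (hrefl : ∀ a, r a a)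
    (hsymm : ∀ a b, r a b → r b a) (h : ∀ a, a < σ a → r a (σ a)) (a : α) : r a (σ a) := by
  rcases lt_trichotomy a (σ a) with hlt | heq | hgt
  · exact h a hlt
  · rw [← heq]
    exact hrefl a
  · have := h (σ a) (by rwa [hσ a])
    rw [hσ a] at this
    exact hsymm _ _ this

theorem matching_split_dichotomy_general (k : ℕ)
    (σ : Fin (2 * k) → Fin (2 * k)) (hinv : Function.Involutive σ)
    (J : (Fin (2 * k) → ℝ) →ₗ[ℝ] (Fin (2 * k) → ℝ))
    (hskew : ∀ u v, neutralForm k (J u) v = - neutralForm k u (J v))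
    (hval : ∀ i, i < σ i →
      neutralForm k (J (stdVec k i)) (stdVec k (σ i)) = 1 / k ∨
      neutralForm k (J (stdVec k i)) (stdVec k (σ i)) = -(1 / k))
    (h0 : ∀ i, i < σ i → ∀ m, m ≠ σ i → neutralForm k (J (stdVec k i)) (stdVec k m) = 0)
    (lam : ℝ) (hlam : lam = 1 ∨ lam = -1)
    (hJsq : ∀ u, J (J u) = lam • u) :
    Xor' ((∀ i, (i.val < k ↔ (σ i).val < k)) ∧ lam = -1)
         ((∀ i, i < σ i → i.val < k ∧ k ≤ (σ i).val) ∧ lam = 1) := by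
  have key : ∀ i, i < σ i → lam * signWeight k i = -signWeight k (σ i) := by
    intro i hi
    have hJi := eq_smul_stdVec_of_neutralForm_eq_zero (h0 i hi)
    have hc : J (stdVec k i) (σ i) ^ 2 = 1 := by
      have := hval i hi
      rw [neutralForm_stdVec_right] at this
      exact sq_eq_one_of_signWeight_mul this
    simpa [hc] using mul_signWeight_eq_of_apply_stdVec hskew hJsq hJi
  rcases hlam with rfl | rfl
  · have crossing : ∀ i, i < σ i → i.val < k ∧ k ≤ (σ i).val := by
      intro i hi
      have := (signWeight_eq_neg_iff _ _).mp (by simpa [eq_comm] using key i hi)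
      have : i.val < (σ i).val := hi
      omega
    exact Or.inr ⟨⟨crossing, rfl⟩, fun h => by norm_num at h⟩
  · have sameBlock : ∀ i, (i.val < k ↔ (σ i).val < k) :=
      hinv.forall_of_lt (r := fun a b => (a.val < k ↔ b.val < k)) (fun _ => Iff.rfl)
        (fun _ _ => Iff.symm) fun i hi => (signWeight_eq_iff _ _).mp (by simpa using key i hi)
    exact Or.inl ⟨⟨sameBlock, rfl⟩, fun h => by norm_num at h⟩

/-- Let `p` be a perfect matching of `{1, …, 2k}` (encoded as the fixed-point-free
involution `σ`) and `J` a skew-symmetric operator matched along `p` as stated.  If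
`J² = λ·id` with `λ ∈ {1, −1}`, then exactly one of the following holds: either every
pair of the matching stays within one block of the signature split (and then `λ = −1`),
or every pair crosses the split (and then `λ = 1`). -/
theorem matching_split_dichotomy (k : ℕ) (hk : 1 ≤ k)
    (σ : Fin (2 * k) → Fin (2 * k)) (hinv : Function.Involutive σ)
    (hfpf : ∀ a, σ a ≠ a)
    (J : (Fin (2 * k) → ℝ) →ₗ[ℝ] (Fin (2 * k) → ℝ))
    (hskew : ∀ u v, neutralForm k (J u) v = - neutralForm k u (J v))
    (hval : ∀ i, i < σ i →
      neutralForm k (J (stdVec k i)) (stdVec k (σ i)) = 1 / k ∨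
      neutralForm k (J (stdVec k i)) (stdVec k (σ i)) = -(1 / k))
    (h0 : ∀ i, i < σ i → ∀ m, m ≠ σ i → neutralForm k (J (stdVec k i)) (stdVec k m) = 0)
    (lam : ℝ) (hlam : lam = 1 ∨ lam = -1)
    (hJsq : ∀ u, J (J u) = lam • u) :
    Xor' ((∀ i, (i.val < k ↔ (σ i).val < k)) ∧ lam = -1)
         ((∀ i, i < σ i → i.val < k ∧ k ≤ (σ i).val) ∧ lam = 1) :=
  matching_split_dichotomy_general k σ hinv J hskew hval h0 lam hlam hJsq
end

section
/- Let J_1 and J_2 be 2k×2k signed permutation matrices satisfying J_1² = J_2² = −I and J_1J_2 = −J_2J_1. For m = 1,2 let M_m be the perfect matching of the complete graph K_{2k} consisting of the edges {i,j} such that J_m e_i = ±e_j. Then M_1 and M_2 are edge-disjoint, and every connected component of the spanning subgraph of K_{2k} with edge set M_1 ∪ M_2 is a cycle of length 4. -/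
/-! Since `J_m² = -1`, each `J_m` sends `e_i` to `±e_{σ_m i}` for a fixed-point-free involution
`σ_m`. If `σ₁ i = σ₂ i`, then `J₁J₂e_i` and `J₂J₁e_i` are the same multiple of `e_i`, which
anticommutation forbids; comparing `J₁J₂e_i = -J₂J₁e_i` up to sign shows that `σ₁` and `σ₂`
commute. Hence the components of `M₁ ∪ M₂` are the orbits `{v, σ₁v, σ₂v, σ₁σ₂v}` of the Klein
four-group `⟨σ₁, σ₂⟩`, each a 4-cycle. -/

open Matrix

/-- A signed permutation matrix: each row and each column contains exactly one nonzero
entry, and that entry is `1` or `−1`. -/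
def IsSignedPermMatrix {n : ℕ} (B : Matrix (Fin n) (Fin n) ℝ) : Prop :=
  (∀ i, ∃! j, B i j ≠ 0) ∧ (∀ j, ∃! i, B i j ≠ 0) ∧
    (∀ i j, B i j = 0 ∨ B i j = 1 ∨ B i j = -1)

/-- `MatchedBy J i j` states that the operator given by the matrix `J` maps the standard
basis vector `e_i` to `±e_j`. -/
def MatchedBy {n : ℕ} (J : Matrix (Fin n) (Fin n) ℝ) (i j : Fin n) : Prop :=
  J.mulVec (Pi.single i 1) = Pi.single j 1 ∨ J.mulVec (Pi.single i 1) = -Pi.single j 1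

section SignedBasisVectors

variable {ι : Type*} [DecidableEq ι]

lemma single_one_ne_neg_single_one (j l : ι) : (Pi.single j 1 : ι → ℝ) ≠ -Pi.single l 1 := by
  intro h
  have := congrFun h j
  by_cases hjl : j = l <;> norm_num [hjl] at this

lemma eq_of_single_one_eq_single_one {j l : ι} (h : (Pi.single j 1 : ι → ℝ) = Pi.single l 1) :
    j = l := by
  by_contra hjl
  simpa [hjl] using congrFun h j

end SignedBasisVectors

namespace MatchedBy

variable {n : ℕ} {J J₁ J₂ : Matrix (Fin n) (Fin n) ℝ} {i j l m : Fin n}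

lemma unique (hj : MatchedBy J i j) (hl : MatchedBy J i l) : j = l := by
  rcases hj with hj | hj <;> rcases hl with hl | hl
  · exact eq_of_single_one_eq_single_one (hj ▸ hl)
  · exact absurd (hj ▸ hl) (single_one_ne_neg_single_one j l)
  · exact absurd (hl ▸ hj) (single_one_ne_neg_single_one l j)
  · exact eq_of_single_one_eq_single_one (neg_inj.mp (hj ▸ hl))

lemma mulVec_cases (hsq : J * J = -1) (h : MatchedBy J i j) :
    (J *ᵥ Pi.single i 1 = Pi.single j 1 ∧ J *ᵥ Pi.single j 1 = -Pi.single i 1) ∨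
      (J *ᵥ Pi.single i 1 = -Pi.single j 1 ∧ J *ᵥ Pi.single j 1 = Pi.single i 1) := by
  have hsq' : J *ᵥ (J *ᵥ Pi.single i 1) = -Pi.single i 1 := by
    rw [mulVec_mulVec, hsq, neg_mulVec, one_mulVec]
  rcases h with h | h
  · exact Or.inl ⟨h, h ▸ hsq'⟩
  · rw [h, mulVec_neg, neg_inj] at hsq'
    exact Or.inr ⟨h, hsq'⟩

lemma symm (hsq : J * J = -1) (h : MatchedBy J i j) : MatchedBy J j i := by
  rcases mulVec_cases hsq h with ⟨-, h⟩ | ⟨-, h⟩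
  · exact Or.inr h
  · exact Or.inl h

lemma ne (hsq : J * J = -1) (h : MatchedBy J i j) : i ≠ j := by
  rintro rfl
  rcases mulVec_cases hsq h with ⟨h₁, h₂⟩ | ⟨h₁, h₂⟩
  · exact single_one_ne_neg_single_one i i (h₁.symm.trans h₂)
  · exact single_one_ne_neg_single_one i i (h₂.symm.trans h₁)

lemma mulVec_mulVec_anticomm (hanti : J₁ * J₂ = -(J₂ * J₁)) (v : Fin n → ℝ) :
    J₁ *ᵥ (J₂ *ᵥ v) = -(J₂ *ᵥ (J₁ *ᵥ v)) := by
  rw [mulVec_mulVec, mulVec_mulVec, hanti, neg_mulVec]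

lemma not_of_anticomm (hsq₁ : J₁ * J₁ = -1) (hsq₂ : J₂ * J₂ = -1)
    (hanti : J₁ * J₂ = -(J₂ * J₁)) (h₁ : MatchedBy J₁ i j) : ¬MatchedBy J₂ i j := by
  intro h₂
  have key := mulVec_mulVec_anticomm hanti (Pi.single i 1)
  rcases mulVec_cases hsq₁ h₁ with ⟨ha, ha'⟩ | ⟨ha, ha'⟩ <;>
    rcases mulVec_cases hsq₂ h₂ with ⟨hb, hb'⟩ | ⟨hb, hb'⟩ <;>
    simp only [ha, ha', hb, hb', mulVec_neg, neg_neg] at key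
  all_goals
    have := congrFun key i
    norm_num at this

lemma of_anticomm (hanti : J₁ * J₂ = -(J₂ * J₁)) (hij : MatchedBy J₁ i j)
    (hjl : MatchedBy J₂ j l) (him : MatchedBy J₂ i m) : MatchedBy J₁ m l := by
  have key := mulVec_mulVec_anticomm hanti (Pi.single i 1)
  rcases him with him | him <;> rcases hij with hij | hij <;> rcases hjl with hjl | hjl <;>
    simp only [him, hij, hjl, mulVec_neg, neg_neg, neg_eq_iff_eq_neg] at key
  all_goals first | exact Or.inl key | exact Or.inr key

end MatchedBy

namespace IsSignedPermMatrix

variable {n : ℕ} {J : Matrix (Fin n) (Fin n) ℝ}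

lemma exists_matchedBy (h : IsSignedPermMatrix J) (i : Fin n) : ∃ j, MatchedBy J i j := by
  obtain ⟨j, hj, huniq⟩ := h.2.1 i
  have hcol : J *ᵥ Pi.single i 1 = Pi.single j (J j i) := by
    ext r
    rw [mulVec_single_one]
    by_cases hr : r = j
    · simp [hr]
    · simp [hr, not_imp_comm.mp (huniq r) hr]
  refine ⟨j, ?_⟩
  rcases h.2.2 j i with h0 | h1 | hm1
  · exact absurd h0 hj
  · exact Or.inl (by rw [hcol, h1])
  · exact Or.inr (by rw [hcol, hm1, Pi.single_neg])

lemma exists_involutive_matchedBy_iff (h : IsSignedPermMatrix J) (hsq : J * J = -1) :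
    ∃ σ : Fin n → Fin n, Function.Involutive σ ∧ (∀ i, σ i ≠ i) ∧
      ∀ i j, MatchedBy J i j ↔ j = σ i := by
  choose σ hσ using h.exists_matchedBy
  refine ⟨σ, fun i => (hσ (σ i)).unique ((hσ i).symm hsq), fun i => ((hσ i).ne hsq).symm,
    fun i j => ⟨fun hj => hj.unique (hσ i), fun hj => hj ▸ hσ i⟩⟩

end IsSignedPermMatrix

lemma ncard_orbit_of_involutions_eq_four {V : Type*} {s t : V → V} (hs : Function.Involutive s)
    (hs₀ : ∀ v, s v ≠ v) (ht₀ : ∀ v, t v ≠ v) (hst : ∀ v, s v ≠ t v) (v : V) :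
    ({v, s v, t v, s (t v)} : Set V).ncard = 4 := by
  have h₁ : v ≠ s (t v) := fun h => hst v ((congrArg s h).trans (hs (t v)))
  have h₂ : s v ≠ s (t v) := fun h => ht₀ v (hs.injective h).symm
  rw [Set.ncard_insert_of_notMem (by simp [(hs₀ v).symm, (ht₀ v).symm, h₁]),
    Set.ncard_insert_of_notMem (by simp [hst v, h₂]), Set.ncard_pair (hs₀ (t v)).symm]

namespace SimpleGraph

variable {V : Type*} {s t : V → V}

def involutionGraph (s t : V → V) : SimpleGraph V :=
  fromRel fun v u => u = s v ∨ u = t v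

lemma involutionGraph_adj (hs : Function.Involutive s) (ht : Function.Involutive t) {v u : V} :
    (involutionGraph s t).Adj v u ↔ v ≠ u ∧ (u = s v ∨ u = t v) := by
  rw [involutionGraph, fromRel_adj]
  refine and_congr_right fun _ => ⟨?_, Or.inl⟩
  rintro ((rfl | rfl) | (rfl | rfl))
  exacts [Or.inl rfl, Or.inr rfl, Or.inl (hs u).symm, Or.inr (ht u).symm]

lemma neighborSet_involutionGraph (hs : Function.Involutive s) (ht : Function.Involutive t)
    (hs₀ : ∀ v, s v ≠ v) (ht₀ : ∀ v, t v ≠ v) (v : V) :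
    (involutionGraph s t).neighborSet v = {s v, t v} := by
  ext u
  rw [mem_neighborSet, involutionGraph_adj hs ht, Set.mem_insert_iff, Set.mem_singleton_iff]
  refine and_iff_right_of_imp ?_
  rintro (rfl | rfl)
  exacts [(hs₀ v).symm, (ht₀ v).symm]

lemma reachable_involutionGraph {v u : V} (h : u = s v ∨ u = t v) :
    (involutionGraph s t).Reachable v u := by
  by_cases hvu : v = u
  · exact hvu ▸ Reachable.refl v
  · exact Adj.reachable ⟨hvu, Or.inl h⟩

lemma supp_connectedComponentMk_involutionGraph (hs : Function.Involutive s)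
    (ht : Function.Involutive t) (hcomm : ∀ v, s (t v) = t (s v)) (v : V) :
    ((involutionGraph s t).connectedComponentMk v).supp = {v, s v, t v, s (t v)} := by
  set S : Set V := {v, s v, t v, s (t v)}
  have hclosed : ∀ a b, a ∈ S → (involutionGraph s t).Adj a b → b ∈ S := by
    intro a b ha hab
    rcases ((involutionGraph_adj hs ht).mp hab).2 with rfl | rfl <;>
      rcases ha with rfl | rfl | rfl | rfl <;>
      simp only [S, Set.mem_insert_iff, Set.mem_singleton_iff, hs _, ht _, hcomm] <;>
      tauto
  ext u
  rw [ConnectedComponent.mem_supp_iff, ConnectedComponent.eq, reachable_comm]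
  constructor
  · rw [reachable_iff_reflTransGen]
    intro hu
    induction hu with
    | refl => exact Set.mem_insert v _
    | tail _ hab ih => exact hclosed _ _ ih hab
  · have hvt : (involutionGraph s t).Reachable v (t v) := reachable_involutionGraph (Or.inr rfl)
    rintro (rfl | rfl | rfl | rfl)
    · rfl
    · exact reachable_involutionGraph (Or.inl rfl)
    · exact hvt
    · exact hvt.trans (reachable_involutionGraph (Or.inl rfl))

end SimpleGraph

theorem matchings_of_anticommuting_signed_perms_general (k : ℕ)
    (J₁ J₂ : Matrix (Fin (2 * k)) (Fin (2 * k)) ℝ)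
    (h1 : IsSignedPermMatrix J₁) (h2 : IsSignedPermMatrix J₂)
    (hsq1 : J₁ * J₁ = -1) (hsq2 : J₂ * J₂ = -1)
    (hanti : J₁ * J₂ = -(J₂ * J₁)) :
    let G : SimpleGraph (Fin (2 * k)) :=
      SimpleGraph.fromRel (fun i j => MatchedBy J₁ i j ∨ MatchedBy J₂ i j);
    (∀ i j : Fin (2 * k), ¬(MatchedBy J₁ i j ∧ MatchedBy J₂ i j)) ∧
    (∀ v, (G.neighborSet v).ncard = 2) ∧
    (∀ v, (G.connectedComponentMk v).supp.ncard = 4) := by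
  intro G
  obtain ⟨s, hs, hs₀, hsM⟩ := h1.exists_involutive_matchedBy_iff hsq1
  obtain ⟨t, ht, ht₀, htM⟩ := h2.exists_involutive_matchedBy_iff hsq2
  have hdisj : ∀ i j, ¬(MatchedBy J₁ i j ∧ MatchedBy J₂ i j) := fun i j h =>
    h.1.not_of_anticomm hsq1 hsq2 hanti h.2
  have hst : ∀ v, s v ≠ t v := fun v h => hdisj v (s v) ⟨(hsM v _).2 rfl, (htM v _).2 h⟩
  have hcomm : ∀ v, s (t v) = t (s v) := fun v =>
    ((hsM _ _).1 (((hsM v _).2 rfl).of_anticomm hanti ((htM _ _).2 rfl) ((htM v _).2 rfl))).symm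
  have hG : G = SimpleGraph.involutionGraph s t := by
    simp only [G, SimpleGraph.involutionGraph, hsM, htM]
  refine ⟨hdisj, fun v => ?_, fun v => ?_⟩
  · rw [hG, SimpleGraph.neighborSet_involutionGraph hs ht hs₀ ht₀, Set.ncard_pair (hst v)]
  · rw [hG, SimpleGraph.supp_connectedComponentMk_involutionGraph hs ht hcomm,
      ncard_orbit_of_involutions_eq_four hs hs₀ ht₀ hst]

/-- If `J₁, J₂` are `2k × 2k` signed permutation matrices with `J₁² = J₂² = −I` and
`J₁J₂ = −J₂J₁`, then the perfect matchings `M₁, M₂` they induce (edges `{i,j}` with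
`J_m e_i = ±e_j`) are edge-disjoint, and in the spanning subgraph of `K_{2k}` with edge
set `M₁ ∪ M₂`, every vertex has degree 2 and every connected component has exactly 4
vertices; i.e. every connected component is a cycle of length 4. -/
theorem matchings_of_anticommuting_signed_perms (k : ℕ) (hk : 1 ≤ k)
    (J₁ J₂ : Matrix (Fin (2 * k)) (Fin (2 * k)) ℝ)
    (h1 : IsSignedPermMatrix J₁) (h2 : IsSignedPermMatrix J₂)
    (hsq1 : J₁ * J₁ = -1) (hsq2 : J₂ * J₂ = -1)
    (hanti : J₁ * J₂ = -(J₂ * J₁)) :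
    let G : SimpleGraph (Fin (2 * k)) :=
      SimpleGraph.fromRel (fun i j => MatchedBy J₁ i j ∨ MatchedBy J₂ i j);
    (∀ i j : Fin (2 * k), ¬(MatchedBy J₁ i j ∧ MatchedBy J₂ i j)) ∧
    (∀ v, (G.neighborSet v).ncard = 2) ∧
    (∀ v, (G.connectedComponentMk v).supp.ncard = 4) :=
  matchings_of_anticommuting_signed_perms_general k J₁ J₂ h1 h2 hsq1 hsq2 hanti
end

section
/- If n = h ⊕ z is a pseudo H-type algebra whose center z has dimension strictly greater than 1, then the dimension of the horizontal space h is a multiple of 4. -/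
/-- A two-step nilpotent metric Lie algebra: a finite-dimensional real Lie algebra `carrier`
with `⁅⁅x,y⁆,z⁆ = 0`, equipped with a nondegenerate symmetric bilinear form `form` such that
`carrier = horizontal ⊕ center` is an orthogonal direct sum, where `center` is the center of
the Lie algebra, and the restriction of `form` to the center is nondegenerate. -/
structure TwoStepMetricLieAlgebra where
  carrier : Type
  [lieRing : LieRing carrier]
  [lieAlgebra : LieAlgebra ℝ carrier]
  [finDim : FiniteDimensional ℝ carrier]
  form : carrier →ₗ[ℝ] carrier →ₗ[ℝ] ℝ
  horizontal : Submodule ℝ carrier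
  center : Submodule ℝ carrier
  two_step : ∀ x y w : carrier, ⁅⁅x, y⁆, w⁆ = 0
  form_symm : ∀ x y : carrier, form x y = form y x
  form_nondeg : ∀ x : carrier, (∀ y : carrier, form x y = 0) → x = 0
  center_def : ∀ x : carrier, x ∈ center ↔ ∀ y : carrier, ⁅x, y⁆ = 0
  compl : IsCompl horizontal center
  orthogonal_decomp : ∀ x ∈ horizontal, ∀ y ∈ center, form x y = 0
  form_center_nondeg : ∀ x ∈ center, (∀ y ∈ center, form x y = 0) → x = 0

attribute [instance] TwoStepMetricLieAlgebra.lieRing TwoStepMetricLieAlgebra.lieAlgebra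
  TwoStepMetricLieAlgebra.finDim

/-- A pseudo H-type algebra: a two-step nilpotent metric Lie algebra whose operators
`J_z : horizontal → horizontal`, defined by `⟨J_z u, v⟩ = ⟨z, ⁅u,v⁆⟩`, satisfy the
orthogonality condition `⟨J_z u, J_z v⟩ = ⟨z,z⟩ ⟨u,v⟩`.  (The operator `J_z u` is encoded
implicitly as the element `ju ∈ horizontal` with `⟨ju, w⟩ = ⟨z, ⁅u,w⁆⟩` for all
`w ∈ horizontal`.) -/
structure PseudoHTypeAlgebra extends TwoStepMetricLieAlgebra where
  jOrth : ∀ z ∈ center, ∀ u ∈ horizontal, ∀ v ∈ horizontal,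
    ∀ ju ∈ horizontal, ∀ jv ∈ horizontal,
      (∀ w ∈ horizontal, form ju w = form z ⁅u, w⁆) →
      (∀ w ∈ horizontal, form jv w = form z ⁅v, w⁆) →
      form ju jv = form z z * form u v

/-!
Choose orthogonal `z₁, z₂` in the centre with `⟨zᵢ, zᵢ⟩ ≠ 0` (two vectors of an orthogonal
basis). The operators `J_{z₁}, J_{z₂}` are skew for the horizontal form, anticommute, and square
to the nonzero scalars `-⟨zᵢ, zᵢ⟩`. If both squares are negative, rescaling makes them the `i, j`
of a quaternion action on `h`. Otherwise one of them rescales to a skew involution `T`; its `±1`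
eigenspaces `P, N` are complementary and isotropic and are swapped by the other operator `S`, so
`(u, v) ↦ ⟨u, S v⟩` is a nondegenerate alternating form on `P`. Hence `dim P` is even and
`dim h = 2 dim P` is divisible by `4`.
-/

open Module Matrix

namespace LinearMap.BilinForm

variable {K V : Type*} [Field K] [AddCommGroup V] [Module K V] [FiniteDimensional K V]

theorem even_finrank_of_isAlt [CharZero K] {ω : LinearMap.BilinForm K V} (hω : ω.IsAlt)
    (hnd : ω.Nondegenerate) : Even (finrank K V) := by
  let M := toMatrix (finBasis K V) ω
  have hdet : M.det ≠ 0 := (nondegenerate_iff_det_ne_zero _).mp hnd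
  have hskew : Mᵀ = -M := by
    ext i j
    simp only [M, Matrix.transpose_apply, Matrix.neg_apply, toMatrix_apply, hω.neg_eq]
  by_contra hodd
  have : M.det = -M.det := by
    conv_lhs => rw [← Matrix.det_transpose, hskew, Matrix.det_neg]
    simp [(Nat.not_even_iff_odd.mp hodd).neg_one_pow]
  exact hdet (self_eq_neg.mp this)

theorem exists_isOrtho_anisotropic_pair [Invertible (2 : K)] {B : LinearMap.BilinForm K V}
    (hB : B.IsSymm) (hnd : B.Nondegenerate) (h : 1 < finrank K V) :
    ∃ x y, B x x ≠ 0 ∧ B y y ≠ 0 ∧ B x y = 0 := by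
  obtain ⟨v, hv⟩ := exists_orthogonal_basis (isSymm_iff.mp hB)
  let i : Fin (finrank K V) := ⟨0, by omega⟩
  let j : Fin (finrank K V) := ⟨1, h⟩
  exact ⟨v i, v j, iIsOrtho.not_isOrtho_basis_self_of_nondegenerate hv hnd i,
    iIsOrtho.not_isOrtho_basis_self_of_nondegenerate hv hnd j, hv (by simp [i, j, Fin.ext_iff])⟩

theorem Nondegenerate.eq_of_forall_apply_eq {B : LinearMap.BilinForm K V} (hB : B.Nondegenerate)
    {x y : V} (h : ∀ w, B x w = B y w) : x = y :=
  (B.toDual hB).injective (LinearMap.ext h)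

end LinearMap.BilinForm

namespace Module.End

variable {K V : Type*} [Field K] [AddCommGroup V] [Module K V]

theorem isCompl_eigenspace_one_neg_one [NeZero (2 : K)] {T : End K V} (hT : T * T = 1) :
    IsCompl (T.eigenspace 1) (T.eigenspace (-1)) := by
  have hT' (x : V) : T (T x) = x := congr($hT x)
  constructor
  · rw [Submodule.disjoint_def]
    intro x hx hx'
    rw [mem_eigenspace_iff] at hx hx'
    have h2 : (2 : K) • x = 0 := by
      rw [two_smul]
      nth_rw 1 [← one_smul K x]
      rw [← hx, hx', neg_one_smul, neg_add_cancel]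
    exact (smul_eq_zero.mp h2).resolve_left two_ne_zero
  · rw [codisjoint_iff, eq_top_iff]
    intro x _
    have hx : x = (2 : K)⁻¹ • (x + T x) + (2 : K)⁻¹ • (x - T x) := by
      rw [← smul_add, add_add_sub_cancel, ← two_smul K x, smul_smul, inv_mul_cancel₀ two_ne_zero,
        one_smul]
    rw [hx]
    refine Submodule.add_mem_sup (Submodule.smul_mem _ _ ?_) (Submodule.smul_mem _ _ ?_) <;>
      simp [hT', add_comm]

theorem apply_apply_eq_zero_of_mem_eigenspace [CharZero K] {B : LinearMap.BilinForm K V}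
    {T : End K V} (hT : ∀ x y, B (T x) y = -B x (T y)) {μ : K} (hμ : μ ≠ 0) {x y : V}
    (hx : x ∈ T.eigenspace μ) (hy : y ∈ T.eigenspace μ) : B x y = 0 := by
  have h := hT x y
  rw [mem_eigenspace_iff.mp hx, mem_eigenspace_iff.mp hy, map_smul, map_smul,
    LinearMap.smul_apply, smul_eq_mul] at h
  exact (mul_eq_zero.mp (self_eq_neg.mp h)).resolve_left hμ

theorem map_eigenspace_le_eigenspace_neg {T S : End K V} (hTS : T * S = -(S * T)) (μ : K) :
    (T.eigenspace μ).map S ≤ T.eigenspace (-μ) := by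
  rintro _ ⟨x, hx, rfl⟩
  rw [SetLike.mem_coe, mem_eigenspace_iff] at hx
  rw [mem_eigenspace_iff, ← mul_apply, hTS, LinearMap.neg_apply, mul_apply, hx, map_smul,
    neg_smul]

theorem smul_mul_smul_self {R M : Type*} [CommSemiring R] [AddCommMonoid M] [Module R M]
    {T : End R M} {a : R} (hT : T * T = a • 1) (c : R) :
    (c • T) * (c • T) = (c * c * a) • 1 := by
  rw [smul_mul_smul_comm, hT, smul_smul]

end Module.End

open Module.End in
theorem four_dvd_finrank_of_skew_involution {K V : Type*} [Field K] [CharZero K]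
    [AddCommGroup V] [Module K V] [FiniteDimensional K V] {B : LinearMap.BilinForm K V}
    (hB : B.IsSymm) (hnd : B.Nondegenerate) {T S : End K V} (hT : T * T = 1)
    (hS : Function.Injective S) (hTS : T * S = -(S * T))
    (hTskew : ∀ x y, B (T x) y = -B x (T y)) (hSskew : ∀ x y, B (S x) y = -B x (S y)) :
    4 ∣ finrank K V := by
  set P := T.eigenspace 1
  set N := T.eigenspace (-1)
  have hcompl : IsCompl P N := isCompl_eigenspace_one_neg_one hT
  have hPN : P.map S ≤ N := map_eigenspace_le_eigenspace_neg hTS 1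
  have hNP : N.map S ≤ P := by simpa using map_eigenspace_le_eigenspace_neg hTS (-1)
  have hrank_map (W : Submodule K V) : finrank K (W.map S) = finrank K W :=
    (Submodule.equivMapOfInjective S hS W).finrank_eq.symm
  have hrank : finrank K P = finrank K N :=
    le_antisymm (hrank_map P ▸ Submodule.finrank_mono hPN)
      (hrank_map N ▸ Submodule.finrank_mono hNP)
  have hSP : P.map S = N := Submodule.eq_of_le_of_finrank_eq hPN (by rw [hrank_map, hrank])
  let ω : LinearMap.BilinForm K P := B.compl₁₂ P.subtype (S ∘ₗ P.subtype)
  have hω : ω.IsAlt := fun u ↦ by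
    have h := hSskew u u
    rw [hB.eq] at h
    exact self_eq_neg.mp h
  have hωnd : ω.Nondegenerate := by
    refine (LinearMap.IsRefl.nondegenerate_iff_separatingLeft hω.isRefl).mpr fun u hu ↦ ?_
    refine Subtype.ext (hnd.1 _ fun w ↦ ?_)
    obtain ⟨p, hp, n, hn, rfl⟩ :=
      Submodule.mem_sup.mp (hcompl.codisjoint.eq_top ▸ trivial : w ∈ P ⊔ N)
    rw [← hSP] at hn
    obtain ⟨v, hv, rfl⟩ := hn
    rw [map_add, apply_apply_eq_zero_of_mem_eigenspace hTskew one_ne_zero u.2 hp, zero_add]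
    exact hu ⟨v, hv⟩
  obtain ⟨k, hk⟩ := LinearMap.BilinForm.even_finrank_of_isAlt hω hωnd
  have := Submodule.finrank_add_eq_of_isCompl hcompl
  exact ⟨k, by omega⟩

theorem four_dvd_finrank_of_anticomm_complex_structures {V : Type*} [AddCommGroup V]
    [Module ℝ V] [FiniteDimensional ℝ V] {I J : Module.End ℝ V} (hI : I * I = -1) (hJ : J * J = -1)
    (hIJ : I * J = -(J * I)) : 4 ∣ finrank ℝ V := by
  let q : QuaternionAlgebra.Basis (Module.End ℝ V) (-1 : ℝ) 0 (-1) :=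
    { i := I, j := J, k := I * J
      i_mul_i := by simp [hI]
      j_mul_j := by simp [hJ]
      i_mul_j := rfl
      j_mul_i := by simp [hIJ] }
  let _ : Module (Quaternion ℝ) V := Module.compHom V q.liftHom.toRingHom
  have : IsScalarTower ℝ (Quaternion ℝ) V := ⟨fun r x v ↦ congr($(map_smul q.liftHom r x) v)⟩
  simpa [Quaternion.finrank_eq_four] using Module.finrank_dvd_finrank_right ℝ (Quaternion ℝ) V

section Skew

variable {V : Type*} [AddCommGroup V] [Module ℝ V] [FiniteDimensional ℝ V]
  {B : LinearMap.BilinForm ℝ V} {T S : Module.End ℝ V} {a b : ℝ}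

theorem inv_sqrt_mul_inv_sqrt_mul_self {a : ℝ} (ha : 0 < a) : (√a)⁻¹ * (√a)⁻¹ * a = 1 := by
  rw [← mul_inv, Real.mul_self_sqrt ha.le, inv_mul_cancel₀ ha.ne']

theorem four_dvd_finrank_of_anticomm_skew_of_pos (hB : B.IsSymm) (hnd : B.Nondegenerate)
    (ha : 0 < a) (hb : b ≠ 0) (hT : T * T = a • 1) (hS : S * S = b • 1)
    (hTS : T * S = -(S * T)) (hTskew : ∀ x y, B (T x) y = -B x (T y))
    (hSskew : ∀ x y, B (S x) y = -B x (S y)) : 4 ∣ finrank ℝ V := by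
  set c := (√a)⁻¹
  refine four_dvd_finrank_of_skew_involution hB hnd (T := c • T) ?_ ?_ ?_ ?_ hSskew
  · rw [Module.End.smul_mul_smul_self hT, inv_sqrt_mul_inv_sqrt_mul_self ha, one_smul]
  · intro x y hxy
    simpa [← Module.End.mul_apply, hS, hb] using congr(S $hxy)
  · rw [smul_mul_assoc, mul_smul_comm, hTS, smul_neg]
  · intro x y
    simp [hTskew]

theorem four_dvd_finrank_of_anticomm_skew (hB : B.IsSymm) (hnd : B.Nondegenerate)
    (ha : a ≠ 0) (hb : b ≠ 0) (hT : T * T = a • 1) (hS : S * S = b • 1)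
    (hTS : T * S = -(S * T)) (hTskew : ∀ x y, B (T x) y = -B x (T y))
    (hSskew : ∀ x y, B (S x) y = -B x (S y)) : 4 ∣ finrank ℝ V := by
  rcases ha.lt_or_gt with ha | ha
  · rcases hb.lt_or_gt with hb | hb
    · have hI := Module.End.smul_mul_smul_self hT (√(-a))⁻¹
      have hJ := Module.End.smul_mul_smul_self hS (√(-b))⁻¹
      rw [show (√(-a))⁻¹ * (√(-a))⁻¹ * a = -1 by
        linear_combination -inv_sqrt_mul_inv_sqrt_mul_self (neg_pos.mpr ha), neg_one_smul] at hI
      rw [show (√(-b))⁻¹ * (√(-b))⁻¹ * b = -1 by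
        linear_combination -inv_sqrt_mul_inv_sqrt_mul_self (neg_pos.mpr hb), neg_one_smul] at hJ
      refine four_dvd_finrank_of_anticomm_complex_structures hI hJ ?_
      rw [smul_mul_smul_comm, smul_mul_smul_comm, hTS, smul_neg, mul_comm]
    · exact four_dvd_finrank_of_anticomm_skew_of_pos hB hnd hb ha.ne hS hT
        (neg_eq_iff_eq_neg.mp hTS.symm) hSskew hTskew
  · exact four_dvd_finrank_of_anticomm_skew_of_pos hB hnd ha hb hT hS hTS hTskew hSskew

end Skew

namespace PseudoHTypeAlgebra

variable (A : PseudoHTypeAlgebra)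

abbrev horizontalForm : LinearMap.BilinForm ℝ A.horizontal :=
  LinearMap.BilinForm.restrict A.form A.horizontal

abbrev centerForm : LinearMap.BilinForm ℝ A.center :=
  LinearMap.BilinForm.restrict A.form A.center

theorem horizontalForm_isSymm : A.horizontalForm.IsSymm := ⟨fun _ _ ↦ A.form_symm _ _⟩

theorem centerForm_isSymm : A.centerForm.IsSymm := ⟨fun _ _ ↦ A.form_symm _ _⟩

theorem centerForm_nondegenerate : A.centerForm.Nondegenerate :=
  (LinearMap.IsRefl.nondegenerate_iff_separatingLeft A.centerForm_isSymm.isRefl).mpr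
    fun z hz ↦ Subtype.ext (A.form_center_nondeg z z.2 fun y hy ↦ hz ⟨y, hy⟩)

theorem horizontalForm_nondegenerate : A.horizontalForm.Nondegenerate := by
  refine (LinearMap.IsRefl.nondegenerate_iff_separatingLeft A.horizontalForm_isSymm.isRefl).mpr
    fun u hu ↦ Subtype.ext (A.form_nondeg u fun y ↦ ?_)
  obtain ⟨v, hv, z, hz, rfl⟩ := Submodule.mem_sup.mp (A.compl.codisjoint.eq_top ▸ trivial :
    y ∈ A.horizontal ⊔ A.center)
  rw [map_add, A.orthogonal_decomp u u.2 z hz, add_zero]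
  exact hu ⟨v, hv⟩

def bracketForm (z : A.carrier) : LinearMap.BilinForm ℝ A.horizontal :=
  LinearMap.mk₂ ℝ (fun u w ↦ A.form z ⁅(u : A.carrier), (w : A.carrier)⁆)
    (fun _ _ _ ↦ by simp only [Submodule.coe_add, add_lie, map_add])
    (fun _ _ _ ↦ by simp only [Submodule.coe_smul, smul_lie, map_smul, smul_eq_mul])
    (fun _ _ _ ↦ by simp only [Submodule.coe_add, lie_add, map_add])
    (fun _ _ _ ↦ by simp only [Submodule.coe_smul, lie_smul, map_smul, smul_eq_mul])

noncomputable def J (z : A.carrier) : Module.End ℝ A.horizontal :=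
  (A.horizontalForm.toDual A.horizontalForm_nondegenerate).symm.toLinearMap ∘ₗ A.bracketForm z

theorem horizontalForm_J_apply (z : A.carrier) (u w : A.horizontal) :
    A.horizontalForm (A.J z u) w = A.form z ⁅(u : A.carrier), (w : A.carrier)⁆ :=
  LinearMap.BilinForm.apply_toDual_symm_apply (hB := A.horizontalForm_nondegenerate) _ _

theorem J_skew (z : A.carrier) (u v : A.horizontal) :
    A.horizontalForm (A.J z u) v = -A.horizontalForm u (A.J z v) := by
  rw [horizontalForm_J_apply, A.horizontalForm_isSymm.eq u, horizontalForm_J_apply, ← lie_skew,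
    map_neg]

theorem J_add (z z' : A.carrier) : A.J (z + z') = A.J z + A.J z' :=
  LinearMap.ext fun u ↦ A.horizontalForm_nondegenerate.eq_of_forall_apply_eq fun w ↦ by
    simp only [LinearMap.add_apply, map_add, horizontalForm_J_apply]

theorem J_mul_self {z : A.carrier} (hz : z ∈ A.center) :
    A.J z * A.J z = (-A.form z z) • 1 := by
  refine LinearMap.ext fun u ↦ A.horizontalForm_nondegenerate.eq_of_forall_apply_eq fun w ↦ ?_
  have hJ := A.jOrth z hz u u.2 w w.2 (A.J z u) (A.J z u).2 (A.J z w) (A.J z w).2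
    (fun v hv ↦ A.horizontalForm_J_apply z u ⟨v, hv⟩)
    (fun v hv ↦ A.horizontalForm_J_apply z w ⟨v, hv⟩)
  rw [Module.End.mul_apply, J_skew]
  simp [hJ]

theorem J_anticomm {z z' : A.carrier} (hz : z ∈ A.center) (hz' : z' ∈ A.center)
    (hzz' : A.form z z' = 0) : A.J z * A.J z' = -(A.J z' * A.J z) := by
  have h := A.J_mul_self (A.center.add_mem hz hz')
  have hform : A.form (z + z') (z + z') = A.form z z + A.form z' z' := by
    simp only [map_add, LinearMap.add_apply, hzz', A.form_symm z' z]
    ring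
  rw [J_add, add_mul, mul_add, mul_add, A.J_mul_self hz, A.J_mul_self hz', hform] at h
  linear_combination (norm := module) h

end PseudoHTypeAlgebra

/-- If the center of a pseudo H-type algebra has dimension greater than 1, then the
dimension of the horizontal space is a multiple of 4. -/
theorem pseudoHType_horizontal_dim_multiple_of_four (A : PseudoHTypeAlgebra)
    (h : 1 < Module.finrank ℝ A.center) :
    4 ∣ Module.finrank ℝ A.horizontal := by
  obtain ⟨z₁, z₂, hz₁, hz₂, hz₁₂⟩ := LinearMap.BilinForm.exists_isOrtho_anisotropic_pair
    A.centerForm_isSymm A.centerForm_nondegenerate h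
  exact four_dvd_finrank_of_anticomm_skew A.horizontalForm_isSymm A.horizontalForm_nondegenerate
    (neg_ne_zero.mpr hz₁) (neg_ne_zero.mpr hz₂) (A.J_mul_self z₁.2) (A.J_mul_self z₂.2)
    (A.J_anticomm z₁.2 z₂.2 hz₁₂) (A.J_skew z₁) (A.J_skew z₂)
end
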